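/- arXiv:2509.21942 — 3 statements merged into one kernel-verified Lean document; each statement's English description precedes it below -/
import Mathlib

section
/- Let (V,w) be a finite weighted graph as in the context, let T be an encoding tree of (V,w) of height K in which every leaf is at height 0 and the root λ at height K, and for 1 ≤ h ≤ K−1 let U_h be the set of nodes of T at height h. Define the Shannon entropy H(S) = − Σ_{v∈V} (d_v/vol(V))·log(d_v/vol(V)), the layer entropies H(U_h) = − Σ_{α∈U_h} (vol(V_α)/vol(V))·log(vol(V_α)/vol(V)), and the layer weights η_h = max_{α∈U_h} ((Σ_{i=1}^{l_α} g(V_{α_i}) − g(V_α))/vol(V_α)), where α_1,…,α_{l_α} are the children of α. Then H(S) − Σ_{h=1}^{K−1} η_h·H(U_h) ≤ H^T ≤ H(S). -/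
open Finset

variable {V ι : Type*}

/-- The (weighted) degree of a vertex. -/
noncomputable def deg [Fintype V] (w : V → V → ℝ) (v : V) : ℝ := ∑ u, w v u

/-- The volume of a vertex subset: the sum of the degrees of its vertices. -/
noncomputable def vol [Fintype V] (w : V → V → ℝ) (A : Finset V) : ℝ := ∑ v ∈ A, deg w v

/-- The cut of a vertex subset: the total weight of edges crossing its boundary. -/
noncomputable def cut [Fintype V] [DecidableEq V] (w : V → V → ℝ) (A : Finset V) : ℝ :=
  ∑ u ∈ Aᶜ, ∑ v ∈ A, w u v

/-- An encoding tree of a weighted graph on the vertex set `V`, with node type `ι`: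
a finite rooted tree (given by a parent map), each node labeled with a nonempty subset
of `V`, the root labeled with `V` itself, every leaf labeled with a singleton, and the
labels of the children of any internal node forming a partition of that node's label. -/
structure EncodingTree (V : Type*) [Fintype V] [DecidableEq V]
    (ι : Type*) [Fintype ι] [DecidableEq ι] where
  root : ι
  parent : ι → ι
  label : ι → Finset V
  parent_root : parent root = root
  label_root : label root = Finset.univ
  label_nonempty : ∀ α, (label α).Nonempty
  leaf_singleton : ∀ α, (∀ β, β ≠ root → parent β ≠ α) → (label α).card = 1
  children_disjoint : ∀ ⦃α β γ : ι⦄, β ≠ root → γ ≠ root → parent β = α → parent γ = α →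
    β ≠ γ → Disjoint (label β) (label γ)
  children_union : ∀ α : ι, (∃ β, β ≠ root ∧ parent β = α) →
    (Finset.univ.filter fun β => β ≠ root ∧ parent β = α).biUnion label = label α

variable [Fintype V] [DecidableEq V] [Fintype ι] [DecidableEq ι]

/-- The children of a node of an encoding tree. -/
def EncodingTree.children (T : EncodingTree V ι) (α : ι) : Finset ι :=
  Finset.univ.filter fun β => β ≠ T.root ∧ T.parent β = α

/-- The structural entropy of the weighted graph `(V, w)` under the encoding tree `T`:
`H^T = − Σ_{α ≠ root} (g(V_α)/vol(V)) · log(vol(V_α)/vol(V_{α⁻}))`. -/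
noncomputable def structEntropy (w : V → V → ℝ) (T : EncodingTree V ι) : ℝ :=
  - ∑ α ∈ Finset.univ.filter (fun α => α ≠ T.root),
      (cut w (T.label α) / vol w Finset.univ) *
        Real.log (vol w (T.label α) / vol w (T.label (T.parent α)))

/-- Shannon entropy of the normalized degree distribution:
`H(S) = − Σ_{v ∈ V} (d_v/vol(V)) · log(d_v/vol(V))`. -/
noncomputable def shannonDeg (w : V → V → ℝ) : ℝ :=
  - ∑ v, (deg w v / vol w Finset.univ) * Real.log (deg w v / vol w Finset.univ)

/-- The layer entropy `H(U_h)` at height `h`, for a height function `ht` on the nodes: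
`H(U_h) = − Σ_{α ∈ U_h} (vol(V_α)/vol(V)) · log(vol(V_α)/vol(V))`. -/
noncomputable def layerEntropy (w : V → V → ℝ) (T : EncodingTree V ι) (ht : ι → ℕ)
    (h : ℕ) : ℝ :=
  - ∑ α ∈ Finset.univ.filter (fun α => ht α = h),
      (vol w (T.label α) / vol w Finset.univ) *
        Real.log (vol w (T.label α) / vol w Finset.univ)

/-- The layer weight `η_h = max_{α ∈ U_h} ((Σ_i g(V_{α_i}) − g(V_α)) / vol(V_α))`,
where the maximum is over the nodes at height `h` and `α_i` ranges over children of `α`. -/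
noncomputable def layerWeight (w : V → V → ℝ) (T : EncodingTree V ι) (ht : ι → ℕ)
    (h : ℕ) : ℝ :=
  sSup ((fun α => ((∑ β ∈ T.children α, cut w (T.label β)) - cut w (T.label α)) /
    vol w (T.label α)) '' {α : ι | ht α = h})

/-- **Theorem 4.2 (SIHD).** For a finite weighted graph `(V, w)` and an encoding tree `T`
of height `K` (leaves at height `0`, root at height `K`), the structural entropy satisfies
`H(S) − Σ_{h=1}^{K−1} η_h · H(U_h) ≤ H^T ≤ H(S)`. -/
theorem structural_entropy_bounds [Nonempty V]
    (w : V → V → ℝ)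
    (hsym : ∀ u v, w u v = w v u)
    (hnn : ∀ u v, 0 ≤ w u v)
    (hloop : ∀ v, w v v = 0)
    (hdeg : ∀ v, 0 < deg w v)
    (T : EncodingTree V ι) (K : ℕ) (ht : ι → ℕ)
    (hroot : ht T.root = K)
    (hleaf : ∀ α, (∀ β, β ≠ T.root → T.parent β ≠ α) → ht α = 0)
    (hparent : ∀ β, β ≠ T.root → ht (T.parent β) = ht β + 1) :
    shannonDeg w - ∑ h ∈ Finset.Icc 1 (K - 1), layerWeight w T ht h * layerEntropy w T ht h
        ≤ structEntropy w T ∧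
      structEntropy w T ≤ shannonDeg w := by
  classical
  have hdegnn : ∀ v, 0 ≤ deg w v := fun v => (hdeg v).le
  have hW : 0 < vol w Finset.univ := Finset.sum_pos (fun v _ => hdeg v) Finset.univ_nonempty
  have hL : ∀ α : ι, 0 < vol w (T.label α) := fun α =>
    Finset.sum_pos (fun v _ => hdeg v) (T.label_nonempty α)
  have hLle : ∀ α : ι, vol w (T.label α) ≤ vol w Finset.univ := fun α =>
    Finset.sum_le_sum_of_subset_of_nonneg (Finset.subset_univ _) (fun v _ _ => hdegnn v)
  have hlognn : ∀ α : ι,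
      0 ≤ Real.log (vol w Finset.univ) - Real.log (vol w (T.label α)) := by
    intro α
    have h1 : Real.log (vol w (T.label α)) ≤ Real.log (vol w Finset.univ) :=
      Real.log_le_log (hL α) (hLle α)
    linarith
  have hcut_nonneg : ∀ A : Finset V, 0 ≤ cut w A := fun A =>
    Finset.sum_nonneg fun u _ => Finset.sum_nonneg fun v _ => hnn u v
  have hcut_univ : cut w (Finset.univ : Finset V) = 0 := by simp [cut]
  have hcut_single : ∀ v : V, cut w {v} = deg w v := by
    intro v
    have h1 : (∑ u ∈ ({v} : Finset V)ᶜ, w u v) + ∑ u ∈ ({v} : Finset V), w u v = ∑ u, w u v :=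
      Finset.sum_compl_add_sum _ _
    have h2 : (∑ u, w u v) = deg w v := Finset.sum_congr rfl fun u _ => hsym u v
    have h3 : cut w {v} = ∑ u ∈ ({v} : Finset V)ᶜ, w u v := by simp [cut]
    rw [Finset.sum_singleton, hloop v] at h1
    rw [h3]
    linarith
  -- children membership
  have hch : ∀ γ β : ι, β ∈ T.children γ ↔ β ≠ T.root ∧ T.parent β = γ := by
    intro γ β; simp [EncodingTree.children]
  have hinternal : ∀ γ : ι, ht γ ≠ 0 → ∃ β, β ≠ T.root ∧ T.parent β = γ := by
    intro γ h0
    by_contra hc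
    push_neg at hc
    exact h0 (hleaf γ fun β hβ => hc β hβ)
  have hchU : ∀ γ : ι, ht γ ≠ 0 → (T.children γ).biUnion T.label = T.label γ := fun γ h0 =>
    T.children_union γ (hinternal γ h0)
  have hchdisj : ∀ γ : ι, ((T.children γ : Set ι)).PairwiseDisjoint T.label := by
    intro γ β hβ β' hβ' hne
    rw [Finset.mem_coe, hch] at hβ hβ'
    exact T.children_disjoint hβ.1 hβ'.1 hβ.2 hβ'.2 hne
  have hlabsub : ∀ β : ι, β ≠ T.root → T.label β ⊆ T.label (T.parent β) := by
    intro β hβ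
    have h0 : ht (T.parent β) ≠ 0 := by rw [hparent β hβ]; omega
    rw [← hchU _ h0]
    exact Finset.subset_biUnion_of_mem T.label ((hch _ β).mpr ⟨hβ, rfl⟩)
  -- every node reaches the root; heights of non-root nodes are < K
  have hreach : ∀ β : ι, ∃ k, T.parent^[k] β = T.root := by
    intro β
    by_contra hc
    push_neg at hc
    have hh : ∀ k, ht (T.parent^[k] β) = ht β + k := by
      intro k
      induction k with
      | zero => simp
      | succ k ih =>
        rw [Function.iterate_succ_apply', hparent _ (hc k), ih]
        omega
    have hinj : Function.Injective fun k => T.parent^[k] β := by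
      intro a b hab
      have h := congrArg ht hab
      simp only [hh] at h
      omega
    obtain ⟨a, b, hab, heq⟩ := Finite.exists_ne_map_eq_of_infinite fun k : ℕ => T.parent^[k] β
    exact hab (hinj heq)
  have htltK : ∀ β : ι, β ≠ T.root → ht β < K := by
    have key : ∀ k (β : ι), T.parent^[k] β = T.root → β ≠ T.root → ht β < K := by
      intro k
      induction k with
      | zero => intro β h hβ; exact absurd h hβ
      | succ k ih =>
        intro β h hβ
        rw [Function.iterate_succ_apply] at h
        by_cases hp : T.parent β = T.root
        · have h1 := hparent β hβ
          rw [hp, hroot] at h1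
          omega
        · have h1 := ih (T.parent β) h hp
          have h2 := hparent β hβ
          omega
    intro β hβ
    obtain ⟨k, hk⟩ := hreach β
    exact key k β hk hβ
  have hLvK : Finset.univ.filter (fun α : ι => ht α = K) = {T.root} := by
    ext α
    simp only [Finset.mem_filter, Finset.mem_univ, true_and, Finset.mem_singleton]
    constructor
    · intro hα
      by_contra hne
      have := htltK α hne
      omega
    · rintro rfl; exact hroot
  -- each level below K is the union of the children of the next level
  have hLv_eq : ∀ h : ℕ, h < K →
      Finset.univ.filter (fun α : ι => ht α = h) =
        (Finset.univ.filter fun γ : ι => ht γ = h + 1).biUnion T.children := by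
    intro h hh
    ext α
    simp only [Finset.mem_filter, Finset.mem_univ, true_and, Finset.mem_biUnion]
    constructor
    · intro hα
      have hαr : α ≠ T.root := fun hcon => by rw [hcon, hroot] at hα; omega
      exact ⟨T.parent α, by rw [hparent α hαr, hα], (hch _ α).mpr ⟨hαr, rfl⟩⟩
    · rintro ⟨γ, hγ, hαc⟩
      rw [hch] at hαc
      have h1 := hparent α hαc.1
      rw [hαc.2, hγ] at h1
      omega
  have hchfib : ∀ s : Finset ι, (↑s : Set ι).PairwiseDisjoint T.children := by
    intro s γ _ γ' _ hne
    rw [Function.onFun, Finset.disjoint_left]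
    intro a ha ha'
    rw [hch] at ha ha'
    exact hne (ha.2.symm.trans ha'.2)
  have hsum_level : ∀ (h : ℕ), h < K → ∀ F : ι → ℝ,
      (∑ α ∈ Finset.univ.filter (fun α : ι => ht α = h), F α)
        = ∑ γ ∈ Finset.univ.filter (fun γ : ι => ht γ = h + 1), ∑ β ∈ T.children γ, F β := by
    intro h hh F
    rw [hLv_eq h hh, Finset.sum_biUnion (hchfib _)]
  -- each level's labels partition V
  have hlevel : ∀ h : ℕ, h ≤ K →
      (∀ β γ : ι, ht β = h → ht γ = h → β ≠ γ → Disjoint (T.label β) (T.label γ)) ∧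
        (Finset.univ.filter (fun α : ι => ht α = h)).biUnion T.label = Finset.univ := by
    have main : ∀ d h : ℕ, h + d = K →
        (∀ β γ : ι, ht β = h → ht γ = h → β ≠ γ → Disjoint (T.label β) (T.label γ)) ∧
          (Finset.univ.filter (fun α : ι => ht α = h)).biUnion T.label = Finset.univ := by
      intro d
      induction d with
      | zero =>
        intro h hh
        have hKh : h = K := by omega
        subst hKh
        constructor
        · intro β γ hβ hγ hne
          have hβr : β = T.root := by
            by_contra hc; have := htltK β hc; omega
          have hγr : γ = T.root := by
            by_contra hc; have := htltK γ hc; omega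
          exact absurd (hβr.trans hγr.symm) hne
        · rw [hLvK]
          simp [T.label_root]
      | succ d ih =>
        intro h hh
        have IH := ih (h + 1) (by omega)
        constructor
        · intro β γ hβ hγ hne
          have hβr : β ≠ T.root := fun hc => by rw [hc, hroot] at hβ; omega
          have hγr : γ ≠ T.root := fun hc => by rw [hc, hroot] at hγ; omega
          by_cases hpp : T.parent β = T.parent γ
          · exact T.children_disjoint hβr hγr rfl hpp.symm hne
          · exact (IH.1 (T.parent β) (T.parent γ) (by rw [hparent β hβr, hβ])
              (by rw [hparent γ hγr, hγ]) hpp).mono (hlabsub β hβr) (hlabsub γ hγr)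
        · rw [hLv_eq h (by omega), Finset.biUnion_biUnion, ← IH.2]
          exact Finset.biUnion_congr rfl fun γ hγ => by
            rw [Finset.mem_filter] at hγ
            exact hchU γ (by omega)
    intro h hh
    exact main (K - h) h (by omega)
  have hsum_vertex : ∀ h : ℕ, h ≤ K → ∀ F : V → ℝ,
      (∑ α ∈ Finset.univ.filter (fun α : ι => ht α = h), ∑ v ∈ T.label α, F v) = ∑ v, F v := by
    intro h hh F
    obtain ⟨hdis, hun⟩ := hlevel h hh
    have hd : (↑(Finset.univ.filter (fun α : ι => ht α = h)) : Set ι).PairwiseDisjoint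
        T.label := by
      intro a ha b hb hne
      rw [Finset.mem_coe, Finset.mem_filter] at ha hb
      exact hdis a b ha.2 hb.2 hne
    rw [← Finset.sum_biUnion hd, hun]
  have hvol_children : ∀ γ : ι, ht γ ≠ 0 →
      (∑ β ∈ T.children γ, vol w (T.label β)) = vol w (T.label γ) := by
    intro γ h0
    rw [← hchU γ h0]
    simp only [vol]
    exact (Finset.sum_biUnion (hchdisj γ)).symm
  -- subadditivity of the cut over children
  have hcut_children : ∀ γ : ι, ht γ ≠ 0 →
      cut w (T.label γ) ≤ ∑ β ∈ T.children γ, cut w (T.label β) := by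
    intro γ h0
    have hsplit : ∀ f : V → ℝ,
        (∑ v ∈ T.label γ, f v) = ∑ β ∈ T.children γ, ∑ v ∈ T.label β, f v := by
      intro f
      rw [← hchU γ h0, Finset.sum_biUnion (hchdisj γ)]
    have h1 : cut w (T.label γ) = ∑ v ∈ T.label γ, ∑ u ∈ (T.label γ)ᶜ, w u v := by
      rw [cut]; exact Finset.sum_comm
    rw [h1, hsplit fun v => ∑ u ∈ (T.label γ)ᶜ, w u v]
    refine Finset.sum_le_sum fun β hβ => ?_
    have hsub : T.label β ⊆ T.label γ := by
      rw [hch] at hβ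
      have h2 := hlabsub β hβ.1
      rwa [hβ.2] at h2
    have hcomp : (T.label γ)ᶜ ⊆ (T.label β)ᶜ := Finset.compl_subset_compl.mpr hsub
    calc (∑ v ∈ T.label β, ∑ u ∈ (T.label γ)ᶜ, w u v)
        ≤ ∑ v ∈ T.label β, ∑ u ∈ (T.label β)ᶜ, w u v :=
          Finset.sum_le_sum fun v _ =>
            Finset.sum_le_sum_of_subset_of_nonneg hcomp fun u _ _ => hnn u v
      _ = cut w (T.label β) := by rw [cut]; exact Finset.sum_comm
  -- leaves
  have hsingle : ∀ α : ι, ht α = 0 → ∃ v : V, T.label α = {v} := by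
    intro α hα
    rw [← Finset.card_eq_one]
    apply T.leaf_singleton
    intro β hβ hpβ
    have h1 := hparent β hβ
    rw [hpβ, hα] at h1
    omega
  have hK1 : 1 ≤ K := by
    by_contra hc
    push_neg at hc
    obtain ⟨v, hv⟩ := hsingle T.root (by rw [hroot]; omega)
    have huniv : (Finset.univ : Finset V) = {v} := by rw [← T.label_root, hv]
    have h0 : deg w v = 0 := by
      calc deg w v = ∑ u ∈ (Finset.univ : Finset V), w v u := rfl
        _ = ∑ u ∈ ({v} : Finset V), w v u := by rw [huniv]
        _ = 0 := by rw [Finset.sum_singleton, hloop]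
    exact absurd h0 (hdeg v).ne'
  -- decomposition of non-root nodes by levels
  have hnonroot : ∀ F : ι → ℝ,
      (∑ α ∈ Finset.univ.filter (fun α : ι => α ≠ T.root), F α)
        = ∑ h ∈ Finset.range K, ∑ α ∈ Finset.univ.filter (fun α : ι => ht α = h), F α := by
    intro F
    have hdisj : (↑(Finset.range K) : Set ℕ).PairwiseDisjoint
        (fun h => Finset.univ.filter (fun α : ι => ht α = h)) := by
      intro a _ b _ hne
      rw [Function.onFun, Finset.disjoint_left]
      intro x hx hx'
      rw [Finset.mem_filter] at hx hx'
      exact hne (hx.2.symm.trans hx'.2)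
    rw [← Finset.sum_biUnion hdisj]
    refine Finset.sum_congr ?_ fun _ _ => rfl
    ext α
    simp only [Finset.mem_filter, Finset.mem_univ, true_and, Finset.mem_biUnion,
      Finset.mem_range]
    constructor
    · intro hα
      exact ⟨ht α, htltK α hα, by simp⟩
    · rintro ⟨h, hhK, hα⟩
      intro hcon
      rw [hcon, hroot] at hα
      omega
  -- per-level reindexing of parent sums
  have hstepA : ∀ h, h < K →
      (∑ α ∈ Finset.univ.filter (fun α : ι => ht α = h),
          vol w (T.label α) * Real.log (vol w (T.label (T.parent α))))
        = ∑ γ ∈ Finset.univ.filter (fun γ : ι => ht γ = (h + 1)),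
            vol w (T.label γ) * Real.log (vol w (T.label γ)) := by
    intro h hh
    rw [hsum_level h hh]
    refine Finset.sum_congr rfl fun γ hγ => ?_
    rw [Finset.mem_filter] at hγ
    have h0 : ht γ ≠ 0 := by omega
    have hc : ∀ β ∈ T.children γ,
        vol w (T.label β) * Real.log (vol w (T.label (T.parent β)))
          = vol w (T.label β) * Real.log (vol w (T.label γ)) := by
      intro β hβ
      rw [hch] at hβ
      rw [hβ.2]
    rw [Finset.sum_congr rfl hc, ← Finset.sum_mul, hvol_children γ h0]
  have hstepB : ∀ h, h < K →
      (∑ α ∈ Finset.univ.filter (fun α : ι => ht α = h),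
          cut w (T.label α) * Real.log (vol w (T.label (T.parent α))))
        = ∑ γ ∈ Finset.univ.filter (fun γ : ι => ht γ = (h + 1)),
            (∑ β ∈ T.children γ, cut w (T.label β)) * Real.log (vol w (T.label γ)) := by
    intro h hh
    rw [hsum_level h hh]
    refine Finset.sum_congr rfl fun γ hγ => ?_
    have hc : ∀ β ∈ T.children γ,
        cut w (T.label β) * Real.log (vol w (T.label (T.parent β)))
          = cut w (T.label β) * Real.log (vol w (T.label γ)) := by
      intro β hβ
      rw [hch] at hβ
      rw [hβ.2]
    rw [Finset.sum_congr rfl hc, ← Finset.sum_mul]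
  -- boundary values
  have hAK : (∑ α ∈ Finset.univ.filter (fun α : ι => ht α = K),
      vol w (T.label α) * Real.log (vol w (T.label α)))
        = vol w Finset.univ * Real.log (vol w Finset.univ) := by
    rw [hLvK, Finset.sum_singleton, T.label_root]
  have hA0 : (∑ α ∈ Finset.univ.filter (fun α : ι => ht α = 0),
      vol w (T.label α) * Real.log (vol w (T.label α)))
        = ∑ v, deg w v * Real.log (deg w v) := by
    rw [← hsum_vertex 0 (Nat.zero_le K) fun v => deg w v * Real.log (deg w v)]
    refine Finset.sum_congr rfl fun α hα => ?_
    rw [Finset.mem_filter] at hα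
    obtain ⟨v, hv⟩ := hsingle α hα.2
    rw [hv, Finset.sum_singleton]
    simp [vol]
  have hB0 : (∑ α ∈ Finset.univ.filter (fun α : ι => ht α = 0),
      cut w (T.label α) * Real.log (vol w (T.label α)))
        = ∑ v, deg w v * Real.log (deg w v) := by
    rw [← hsum_vertex 0 (Nat.zero_le K) fun v => deg w v * Real.log (deg w v)]
    refine Finset.sum_congr rfl fun α hα => ?_
    rw [Finset.mem_filter] at hα
    obtain ⟨v, hv⟩ := hsingle α hα.2
    rw [hv, Finset.sum_singleton, hcut_single]
    simp [vol]
  have hBK : (∑ α ∈ Finset.univ.filter (fun α : ι => ht α = K),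
      cut w (T.label α) * Real.log (vol w (T.label α))) = 0 := by
    rw [hLvK, Finset.sum_singleton, T.label_root, hcut_univ, zero_mul]
  have hG0 : (∑ α ∈ Finset.univ.filter (fun α : ι => ht α = 0), cut w (T.label α))
      = vol w Finset.univ := by
    calc (∑ α ∈ Finset.univ.filter (fun α : ι => ht α = 0), cut w (T.label α))
        = ∑ α ∈ Finset.univ.filter (fun α : ι => ht α = 0), ∑ v ∈ T.label α, deg w v := by
          refine Finset.sum_congr rfl fun α hα => ?_
          rw [Finset.mem_filter] at hα
          obtain ⟨v, hv⟩ := hsingle α hα.2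
          rw [hv, Finset.sum_singleton, hcut_single]
      _ = ∑ v, deg w v := hsum_vertex 0 (Nat.zero_le K) _
      _ = vol w Finset.univ := rfl
  have hGK : (∑ α ∈ Finset.univ.filter (fun α : ι => ht α = K), cut w (T.label α)) = 0 := by
    rw [hLvK, Finset.sum_singleton, T.label_root, hcut_univ]
  -- telescoping: the volume sum
  have hPsi : (∑ α ∈ Finset.univ.filter (fun α : ι => α ≠ T.root),
        vol w (T.label α) * (Real.log (vol w (T.label (T.parent α)))
          - Real.log (vol w (T.label α))))
      = vol w Finset.univ * Real.log (vol w Finset.univ)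
        - ∑ v, deg w v * Real.log (deg w v) := by
    rw [hnonroot]
    have hterm : ∀ h ∈ Finset.range K,
        (∑ α ∈ Finset.univ.filter (fun α : ι => ht α = h),
            vol w (T.label α) * (Real.log (vol w (T.label (T.parent α)))
              - Real.log (vol w (T.label α))))
          = (∑ γ ∈ Finset.univ.filter (fun γ : ι => ht γ = (h + 1)),
              vol w (T.label γ) * Real.log (vol w (T.label γ)))
            - ∑ α ∈ Finset.univ.filter (fun α : ι => ht α = h),
                vol w (T.label α) * Real.log (vol w (T.label α)) := by
      intro h hh
      rw [Finset.mem_range] at hh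
      rw [Finset.sum_congr rfl fun α _ => mul_sub (vol w (T.label α)) _ _,
        Finset.sum_sub_distrib, hstepA h hh]
    calc (∑ h ∈ Finset.range K, ∑ α ∈ Finset.univ.filter (fun α : ι => ht α = h),
            vol w (T.label α) * (Real.log (vol w (T.label (T.parent α)))
              - Real.log (vol w (T.label α))))
        = ∑ h ∈ Finset.range K,
            ((∑ γ ∈ Finset.univ.filter (fun γ : ι => ht γ = (h + 1)),
              vol w (T.label γ) * Real.log (vol w (T.label γ)))
            - ∑ α ∈ Finset.univ.filter (fun α : ι => ht α = h),
                vol w (T.label α) * Real.log (vol w (T.label α))) :=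
          Finset.sum_congr rfl hterm
      _ = (∑ α ∈ Finset.univ.filter (fun α : ι => ht α = K),
            vol w (T.label α) * Real.log (vol w (T.label α)))
          - ∑ α ∈ Finset.univ.filter (fun α : ι => ht α = 0),
              vol w (T.label α) * Real.log (vol w (T.label α)) :=
          Finset.sum_range_sub (fun n => ∑ α ∈ Finset.univ.filter (fun α : ι => ht α = n),
            vol w (T.label α) * Real.log (vol w (T.label α))) K
      _ = vol w Finset.univ * Real.log (vol w Finset.univ)
          - ∑ v, deg w v * Real.log (deg w v) := by rw [hAK, hA0]
  -- telescoping: the cut sum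
  have hPhi : (∑ α ∈ Finset.univ.filter (fun α : ι => α ≠ T.root),
        cut w (T.label α) * (Real.log (vol w (T.label (T.parent α)))
          - Real.log (vol w (T.label α))))
      = (∑ h ∈ Finset.range K, ∑ γ ∈ Finset.univ.filter (fun γ : ι => ht γ = (h + 1)),
          ((∑ β ∈ T.children γ, cut w (T.label β)) - cut w (T.label γ))
            * Real.log (vol w (T.label γ)))
        - ∑ v, deg w v * Real.log (deg w v) := by
    rw [hnonroot]
    have hterm : ∀ h ∈ Finset.range K,
        (∑ α ∈ Finset.univ.filter (fun α : ι => ht α = h),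
            cut w (T.label α) * (Real.log (vol w (T.label (T.parent α)))
              - Real.log (vol w (T.label α))))
          = (∑ γ ∈ Finset.univ.filter (fun γ : ι => ht γ = (h + 1)),
              ((∑ β ∈ T.children γ, cut w (T.label β)) - cut w (T.label γ))
                * Real.log (vol w (T.label γ)))
            + ((∑ α ∈ Finset.univ.filter (fun α : ι => ht α = (h + 1)),
                cut w (T.label α) * Real.log (vol w (T.label α)))
              - ∑ α ∈ Finset.univ.filter (fun α : ι => ht α = h),
                  cut w (T.label α) * Real.log (vol w (T.label α))) := by
      intro h hh
      rw [Finset.mem_range] at hh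
      have h2 : (∑ γ ∈ Finset.univ.filter (fun γ : ι => ht γ = (h + 1)),
          ((∑ β ∈ T.children γ, cut w (T.label β)) - cut w (T.label γ))
            * Real.log (vol w (T.label γ)))
          = (∑ γ ∈ Finset.univ.filter (fun γ : ι => ht γ = (h + 1)),
              (∑ β ∈ T.children γ, cut w (T.label β)) * Real.log (vol w (T.label γ)))
            - ∑ γ ∈ Finset.univ.filter (fun γ : ι => ht γ = (h + 1)),
                cut w (T.label γ) * Real.log (vol w (T.label γ)) := by
        rw [← Finset.sum_sub_distrib]
        exact Finset.sum_congr rfl fun γ _ => sub_mul _ _ _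
      rw [Finset.sum_congr rfl fun α _ => mul_sub (cut w (T.label α)) _ _,
        Finset.sum_sub_distrib, hstepB h hh, h2]
      ring
    calc (∑ h ∈ Finset.range K, ∑ α ∈ Finset.univ.filter (fun α : ι => ht α = h),
            cut w (T.label α) * (Real.log (vol w (T.label (T.parent α)))
              - Real.log (vol w (T.label α))))
        = ∑ h ∈ Finset.range K,
            ((∑ γ ∈ Finset.univ.filter (fun γ : ι => ht γ = (h + 1)),
              ((∑ β ∈ T.children γ, cut w (T.label β)) - cut w (T.label γ))
                * Real.log (vol w (T.label γ)))
            + ((∑ α ∈ Finset.univ.filter (fun α : ι => ht α = (h + 1)),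
                cut w (T.label α) * Real.log (vol w (T.label α)))
              - ∑ α ∈ Finset.univ.filter (fun α : ι => ht α = h),
                  cut w (T.label α) * Real.log (vol w (T.label α)))) :=
          Finset.sum_congr rfl hterm
      _ = (∑ h ∈ Finset.range K, ∑ γ ∈ Finset.univ.filter (fun γ : ι => ht γ = (h + 1)),
            ((∑ β ∈ T.children γ, cut w (T.label β)) - cut w (T.label γ))
              * Real.log (vol w (T.label γ)))
          + ∑ h ∈ Finset.range K,
              ((∑ α ∈ Finset.univ.filter (fun α : ι => ht α = (h + 1)),
                cut w (T.label α) * Real.log (vol w (T.label α)))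
              - ∑ α ∈ Finset.univ.filter (fun α : ι => ht α = h),
                  cut w (T.label α) * Real.log (vol w (T.label α))) :=
          Finset.sum_add_distrib
      _ = (∑ h ∈ Finset.range K, ∑ γ ∈ Finset.univ.filter (fun γ : ι => ht γ = (h + 1)),
            ((∑ β ∈ T.children γ, cut w (T.label β)) - cut w (T.label γ))
              * Real.log (vol w (T.label γ)))
          + ((∑ α ∈ Finset.univ.filter (fun α : ι => ht α = K),
              cut w (T.label α) * Real.log (vol w (T.label α)))
            - ∑ α ∈ Finset.univ.filter (fun α : ι => ht α = 0),
                cut w (T.label α) * Real.log (vol w (T.label α))) := by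
          rw [Finset.sum_range_sub (fun n => ∑ α ∈ Finset.univ.filter (fun α : ι => ht α = n),
            cut w (T.label α) * Real.log (vol w (T.label α))) K]
      _ = _ := by rw [hBK, hB0]; ring
  -- total excess mass equals the volume
  have hE : (∑ h ∈ Finset.range K, ∑ γ ∈ Finset.univ.filter (fun γ : ι => ht γ = (h + 1)),
      ((∑ β ∈ T.children γ, cut w (T.label β)) - cut w (T.label γ)))
        = vol w Finset.univ := by
    have hterm : ∀ h ∈ Finset.range K,
        (∑ γ ∈ Finset.univ.filter (fun γ : ι => ht γ = (h + 1)),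
            ((∑ β ∈ T.children γ, cut w (T.label β)) - cut w (T.label γ)))
          = (∑ α ∈ Finset.univ.filter (fun α : ι => ht α = h), cut w (T.label α))
            - ∑ α ∈ Finset.univ.filter (fun α : ι => ht α = (h + 1)), cut w (T.label α) := by
      intro h hh
      rw [Finset.mem_range] at hh
      rw [Finset.sum_sub_distrib, ← hsum_level h hh (fun α => cut w (T.label α))]
    calc (∑ h ∈ Finset.range K, ∑ γ ∈ Finset.univ.filter (fun γ : ι => ht γ = (h + 1)),
            ((∑ β ∈ T.children γ, cut w (T.label β)) - cut w (T.label γ)))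
        = ∑ h ∈ Finset.range K,
            ((∑ α ∈ Finset.univ.filter (fun α : ι => ht α = h), cut w (T.label α))
              - ∑ α ∈ Finset.univ.filter (fun α : ι => ht α = (h + 1)), cut w (T.label α)) :=
          Finset.sum_congr rfl hterm
      _ = (∑ α ∈ Finset.univ.filter (fun α : ι => ht α = 0), cut w (T.label α))
          - ∑ α ∈ Finset.univ.filter (fun α : ι => ht α = K), cut w (T.label α) :=
          Finset.sum_range_sub' (fun n => ∑ α ∈ Finset.univ.filter (fun α : ι => ht α = n),
            cut w (T.label α)) K
      _ = vol w Finset.univ := by rw [hG0, hGK, sub_zero]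
  -- rewriting the entropies
  have hSE : structEntropy w T
      = (∑ α ∈ Finset.univ.filter (fun α : ι => α ≠ T.root),
          cut w (T.label α) * (Real.log (vol w (T.label (T.parent α)))
            - Real.log (vol w (T.label α)))) / vol w Finset.univ := by
    rw [structEntropy]
    have hterm : ∀ α ∈ Finset.univ.filter (fun α : ι => α ≠ T.root),
        (cut w (T.label α) / vol w Finset.univ)
            * Real.log (vol w (T.label α) / vol w (T.label (T.parent α)))
          = -(cut w (T.label α) * (Real.log (vol w (T.label (T.parent α)))
              - Real.log (vol w (T.label α))) / vol w Finset.univ) := by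
      intro α _
      rw [Real.log_div (hL α).ne' (hL (T.parent α)).ne']
      ring
    rw [Finset.sum_congr rfl hterm, Finset.sum_neg_distrib, neg_neg, ← Finset.sum_div]
  have hSh : shannonDeg w
      = (vol w Finset.univ * Real.log (vol w Finset.univ)
          - ∑ v, deg w v * Real.log (deg w v)) / vol w Finset.univ := by
    rw [shannonDeg]
    have hterm : ∀ v ∈ (Finset.univ : Finset V),
        (deg w v / vol w Finset.univ) * Real.log (deg w v / vol w Finset.univ)
          = -((deg w v * Real.log (vol w Finset.univ)
              - deg w v * Real.log (deg w v)) / vol w Finset.univ) := by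
      intro v _
      rw [Real.log_div (hdeg v).ne' hW.ne']
      ring
    rw [Finset.sum_congr rfl hterm, Finset.sum_neg_distrib, neg_neg, ← Finset.sum_div,
      Finset.sum_sub_distrib, ← Finset.sum_mul]
    have hWsum : (∑ v, deg w v) = vol w Finset.univ := rfl
    rw [hWsum]
  -- the central identity
  have hR : (∑ h ∈ Finset.range K, ∑ γ ∈ Finset.univ.filter (fun γ : ι => ht γ = (h + 1)),
      ((∑ β ∈ T.children γ, cut w (T.label β)) - cut w (T.label γ))
        * (Real.log (vol w Finset.univ) - Real.log (vol w (T.label γ))))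
      = vol w Finset.univ * Real.log (vol w Finset.univ)
        - ∑ h ∈ Finset.range K, ∑ γ ∈ Finset.univ.filter (fun γ : ι => ht γ = (h + 1)),
            ((∑ β ∈ T.children γ, cut w (T.label β)) - cut w (T.label γ))
              * Real.log (vol w (T.label γ)) := by
    have h1 : ∀ h ∈ Finset.range K,
        (∑ γ ∈ Finset.univ.filter (fun γ : ι => ht γ = (h + 1)),
            ((∑ β ∈ T.children γ, cut w (T.label β)) - cut w (T.label γ))
              * (Real.log (vol w Finset.univ) - Real.log (vol w (T.label γ))))
          = (∑ γ ∈ Finset.univ.filter (fun γ : ι => ht γ = (h + 1)),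
              ((∑ β ∈ T.children γ, cut w (T.label β)) - cut w (T.label γ)))
                * Real.log (vol w Finset.univ)
            - ∑ γ ∈ Finset.univ.filter (fun γ : ι => ht γ = (h + 1)),
                ((∑ β ∈ T.children γ, cut w (T.label β)) - cut w (T.label γ))
                  * Real.log (vol w (T.label γ)) := by
      intro h _
      rw [Finset.sum_congr rfl fun γ _ => mul_sub _ _ _, Finset.sum_sub_distrib,
        Finset.sum_mul]
    rw [Finset.sum_congr rfl h1, Finset.sum_sub_distrib, ← Finset.sum_mul, hE]
  have hmain : shannonDeg w - structEntropy w T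
      = (∑ h ∈ Finset.range K, ∑ γ ∈ Finset.univ.filter (fun γ : ι => ht γ = (h + 1)),
          ((∑ β ∈ T.children γ, cut w (T.label β)) - cut w (T.label γ))
            * (Real.log (vol w Finset.univ) - Real.log (vol w (T.label γ))))
        / vol w Finset.univ := by
    rw [hSh, hSE, hPhi, hR]
    ring
  -- upper bound
  have hR_nonneg : 0 ≤ ∑ h ∈ Finset.range K,
      ∑ γ ∈ Finset.univ.filter (fun γ : ι => ht γ = (h + 1)),
        ((∑ β ∈ T.children γ, cut w (T.label β)) - cut w (T.label γ))
          * (Real.log (vol w Finset.univ) - Real.log (vol w (T.label γ))) := by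
    refine Finset.sum_nonneg fun h _ => Finset.sum_nonneg fun γ hγ => ?_
    rw [Finset.mem_filter] at hγ
    exact mul_nonneg (sub_nonneg.mpr (hcut_children γ (by omega))) (hlognn γ)
  have hupper : structEntropy w T ≤ shannonDeg w := by
    have h1 := div_nonneg hR_nonneg hW.le
    rw [← hmain] at h1
    linarith
  -- lower bound
  have hWLE : ∀ j : ℕ, vol w Finset.univ * layerEntropy w T ht j
      = ∑ γ ∈ Finset.univ.filter (fun γ : ι => ht γ = j),
          vol w (T.label γ)
            * (Real.log (vol w Finset.univ) - Real.log (vol w (T.label γ))) := by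
    intro j
    rw [layerEntropy]
    have hterm : ∀ γ ∈ Finset.univ.filter (fun γ : ι => ht γ = j),
        (vol w (T.label γ) / vol w Finset.univ)
            * Real.log (vol w (T.label γ) / vol w Finset.univ)
          = -(vol w (T.label γ) * (Real.log (vol w Finset.univ)
              - Real.log (vol w (T.label γ))) / vol w Finset.univ) := by
      intro γ _
      rw [Real.log_div (hL γ).ne' hW.ne']
      ring
    rw [Finset.sum_congr rfl hterm, Finset.sum_neg_distrib, neg_neg, ← Finset.sum_div,
      mul_comm, div_mul_cancel₀ _ hW.ne']
  have hFle : ∀ j : ℕ,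
      (∑ γ ∈ Finset.univ.filter (fun γ : ι => ht γ = j),
          ((∑ β ∈ T.children γ, cut w (T.label β)) - cut w (T.label γ))
            * (Real.log (vol w Finset.univ) - Real.log (vol w (T.label γ))))
        ≤ layerWeight w T ht j * (vol w Finset.univ * layerEntropy w T ht j) := by
    intro j
    rw [hWLE j, Finset.mul_sum]
    refine Finset.sum_le_sum fun γ hγ => ?_
    rw [Finset.mem_filter] at hγ
    have hbdd : BddAbove ((fun α => ((∑ β ∈ T.children α, cut w (T.label β))
        - cut w (T.label α)) / vol w (T.label α)) '' {α : ι | ht α = j}) :=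
      ((Set.toFinite _).image _).bddAbove
    have h1 : ((∑ β ∈ T.children γ, cut w (T.label β)) - cut w (T.label γ))
        / vol w (T.label γ) ≤ layerWeight w T ht j := by
      rw [layerWeight]
      exact le_csSup hbdd ⟨γ, hγ.2, rfl⟩
    rw [div_le_iff₀ (hL γ)] at h1
    calc ((∑ β ∈ T.children γ, cut w (T.label β)) - cut w (T.label γ))
          * (Real.log (vol w Finset.univ) - Real.log (vol w (T.label γ)))
        ≤ layerWeight w T ht j * vol w (T.label γ)
            * (Real.log (vol w Finset.univ) - Real.log (vol w (T.label γ))) :=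
          mul_le_mul_of_nonneg_right h1 (hlognn γ)
      _ = layerWeight w T ht j * (vol w (T.label γ)
            * (Real.log (vol w Finset.univ) - Real.log (vol w (T.label γ)))) := by ring
  have hFK0 : (∑ γ ∈ Finset.univ.filter (fun γ : ι => ht γ = K),
      ((∑ β ∈ T.children γ, cut w (T.label β)) - cut w (T.label γ))
        * (Real.log (vol w Finset.univ) - Real.log (vol w (T.label γ)))) = 0 := by
    rw [hLvK, Finset.sum_singleton, T.label_root]
    simp
  have hreidx : (∑ h ∈ Finset.range K,
        ∑ γ ∈ Finset.univ.filter (fun γ : ι => ht γ = (h + 1)),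
          ((∑ β ∈ T.children γ, cut w (T.label β)) - cut w (T.label γ))
            * (Real.log (vol w Finset.univ) - Real.log (vol w (T.label γ))))
      = ∑ j ∈ Finset.Icc 1 K, ∑ γ ∈ Finset.univ.filter (fun γ : ι => ht γ = j),
          ((∑ β ∈ T.children γ, cut w (T.label β)) - cut w (T.label γ))
            * (Real.log (vol w Finset.univ) - Real.log (vol w (T.label γ))) := by
    rw [← Finset.Ico_add_one_right_eq_Icc, Finset.sum_Ico_eq_sum_range]
    exact Finset.sum_congr (by norm_num) fun i _ => by rw [Nat.add_comm i 1]
  have h2 : (∑ j ∈ Finset.Icc 1 K, ∑ γ ∈ Finset.univ.filter (fun γ : ι => ht γ = j),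
        ((∑ β ∈ T.children γ, cut w (T.label β)) - cut w (T.label γ))
          * (Real.log (vol w Finset.univ) - Real.log (vol w (T.label γ))))
      = (∑ j ∈ Finset.Icc 1 (K - 1), ∑ γ ∈ Finset.univ.filter (fun γ : ι => ht γ = j),
          ((∑ β ∈ T.children γ, cut w (T.label β)) - cut w (T.label γ))
            * (Real.log (vol w Finset.univ) - Real.log (vol w (T.label γ))))
        + ∑ γ ∈ Finset.univ.filter (fun γ : ι => ht γ = (K - 1 + 1)),
            ((∑ β ∈ T.children γ, cut w (T.label β)) - cut w (T.label γ))
              * (Real.log (vol w Finset.univ) - Real.log (vol w (T.label γ))) := by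
    conv_lhs => rw [(show K = (K - 1) + 1 by omega)]
    exact Finset.sum_Icc_succ_top (by omega) _
  have h3 : (∑ γ ∈ Finset.univ.filter (fun γ : ι => ht γ = (K - 1 + 1)),
      ((∑ β ∈ T.children γ, cut w (T.label β)) - cut w (T.label γ))
        * (Real.log (vol w Finset.univ) - Real.log (vol w (T.label γ)))) = 0 := by
    rw [(show K - 1 + 1 = K by omega)]
    exact hFK0
  have h4 : (∑ j ∈ Finset.Icc 1 K, ∑ γ ∈ Finset.univ.filter (fun γ : ι => ht γ = j),
        ((∑ β ∈ T.children γ, cut w (T.label β)) - cut w (T.label γ))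
          * (Real.log (vol w Finset.univ) - Real.log (vol w (T.label γ))))
      ≤ ∑ j ∈ Finset.Icc 1 (K - 1),
          layerWeight w T ht j * (vol w Finset.univ * layerEntropy w T ht j) := by
    rw [h2, h3, add_zero]
    exact Finset.sum_le_sum fun j _ => hFle j
  have h5 : (∑ j ∈ Finset.Icc 1 (K - 1),
        layerWeight w T ht j * (vol w Finset.univ * layerEntropy w T ht j))
      = vol w Finset.univ * ∑ j ∈ Finset.Icc 1 (K - 1),
          layerWeight w T ht j * layerEntropy w T ht j := by
    rw [Finset.mul_sum]
    exact Finset.sum_congr rfl fun j _ => by ring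
  have h6 : shannonDeg w - structEntropy w T
      ≤ ∑ j ∈ Finset.Icc 1 (K - 1), layerWeight w T ht j * layerEntropy w T ht j := by
    rw [hmain, hreidx, div_le_iff₀ hW]
    calc (∑ j ∈ Finset.Icc 1 K, ∑ γ ∈ Finset.univ.filter (fun γ : ι => ht γ = j),
          ((∑ β ∈ T.children γ, cut w (T.label β)) - cut w (T.label γ))
            * (Real.log (vol w Finset.univ) - Real.log (vol w (T.label γ))))
        ≤ ∑ j ∈ Finset.Icc 1 (K - 1),
            layerWeight w T ht j * (vol w Finset.univ * layerEntropy w T ht j) := h4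
      _ = vol w Finset.univ * ∑ j ∈ Finset.Icc 1 (K - 1),
            layerWeight w T ht j * layerEntropy w T ht j := h5
      _ = (∑ j ∈ Finset.Icc 1 (K - 1),
            layerWeight w T ht j * layerEntropy w T ht j) * vol w Finset.univ :=
          mul_comm _ _
  exact ⟨by linarith, hupper⟩
end

section
/- Let (V,w) be a finite weighted graph as in the context and let T be an encoding tree of (V,w) of height K in which every leaf is at height 0 and the root λ at height K. Then the structural entropy is bounded above by the Shannon entropy of the normalized degree distribution: H^T ≤ − Σ_{v∈V} (d_v/vol(V))·log(d_v/vol(V)). -/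
open Finset

variable {V ι : Type*}

variable [Fintype V] [DecidableEq V] [Fintype ι] [DecidableEq ι]

/-- **Upper bound of Theorem 4.2.** The structural entropy of a finite weighted graph
under an encoding tree of height `K` (leaves at height `0`, root at height `K`) is at
most the Shannon entropy of the normalized degree distribution. -/
theorem structural_entropy_le_shannon [Nonempty V]
    (w : V → V → ℝ)
    (hsym : ∀ u v, w u v = w v u)
    (hnn : ∀ u v, 0 ≤ w u v)
    (hloop : ∀ v, w v v = 0)
    (hdeg : ∀ v, 0 < deg w v)
    (T : EncodingTree V ι) (K : ℕ) (ht : ι → ℕ)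
    (hroot : ht T.root = K)
    (hleaf : ∀ α, (∀ β, β ≠ T.root → T.parent β ≠ α) → ht α = 0)
    (hparent : ∀ β, β ≠ T.root → ht (T.parent β) = ht β + 1) :
    structEntropy w T ≤
      - ∑ v, (deg w v / vol w Finset.univ) * Real.log (deg w v / vol w Finset.univ) := by
  classical
  set Vv := vol w Finset.univ with hVvdef
  -- basic positivity facts
  have volpos : ∀ A : Finset V, A.Nonempty → 0 < vol w A := by
    rintro A ⟨v, hv⟩
    exact Finset.sum_pos' (fun u _ => (hdeg u).le) ⟨v, hv, hdeg v⟩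
  have hVpos : 0 < Vv := volpos _ Finset.univ_nonempty
  have volmono : ∀ {A B : Finset V}, A ⊆ B → vol w A ≤ vol w B := by
    intro A B hAB
    exact Finset.sum_le_sum_of_subset_of_nonneg hAB (fun v _ _ => (hdeg v).le)
  have cutnn : ∀ A : Finset V, 0 ≤ cut w A := fun A =>
    Finset.sum_nonneg fun u _ => Finset.sum_nonneg fun v _ => hnn u v
  have cutle : ∀ A : Finset V, cut w A ≤ vol w A := by
    intro A
    have h1 : cut w A ≤ ∑ u, ∑ v ∈ A, w u v :=
      Finset.sum_le_sum_of_subset_of_nonneg (Finset.subset_univ _)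
        (fun u _ _ => Finset.sum_nonneg fun v _ => hnn u v)
    have h2 : (∑ u, ∑ v ∈ A, w u v) = vol w A := by
      rw [Finset.sum_comm]
      refine Finset.sum_congr rfl fun v _ => ?_
      simp only [deg]
      exact Finset.sum_congr rfl fun u _ => hsym u v
    linarith
  -- child label is contained in the parent's label
  have hsub : ∀ β, β ≠ T.root → T.label β ⊆ T.label (T.parent β) := by
    intro β hβ
    have hU := T.children_union (T.parent β) ⟨β, hβ, rfl⟩
    rw [← hU]
    exact Finset.subset_biUnion_of_mem _ (by simp [hβ])
  -- heights are at most K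
  have htle : ∀ β, ht β ≤ K := by
    by_contra hcon
    push_neg at hcon
    obtain ⟨β, hβ⟩ := hcon
    have hS : (Finset.univ.filter fun γ => K < ht γ).Nonempty := ⟨β, by simp [hβ]⟩
    obtain ⟨α, hαmem, hαmax⟩ := Finset.exists_max_image _ ht hS
    have hαK : K < ht α := (Finset.mem_filter.1 hαmem).2
    have hαne : α ≠ T.root := by
      intro h; rw [h, hroot] at hαK; exact lt_irrefl _ hαK
    have hp : ht (T.parent α) = ht α + 1 := hparent α hαne
    have := hαmax (T.parent α) (Finset.mem_filter.2 ⟨Finset.mem_univ _, by omega⟩)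
    omega
  have htlt : ∀ β, β ≠ T.root → ht β < K := by
    intro β hβ
    have h1 := htle β
    have h2 := htle (T.parent β)
    have h3 := hparent β hβ
    omega
  have hroot_of_htK : ∀ β, ht β = K → β = T.root := by
    intro β hβ
    by_contra h
    exact absurd hβ (Nat.ne_of_lt (htlt β h))
  -- labels of distinct nodes at equal heights are disjoint
  have hdisj : ∀ m : ℕ, ∀ α β, α ≠ β → ht α = ht β → K ≤ ht α + m →
      Disjoint (T.label α) (T.label β) := by
    intro m
    induction m with
    | zero =>
      intro α β hne hht hK
      have hα : ht α = K := le_antisymm (htle α) (by omega)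
      have hβ : ht β = K := by omega
      exact absurd ((hroot_of_htK α hα).trans (hroot_of_htK β hβ).symm) hne
    | succ m ih =>
      intro α β hne hht hK
      by_cases hcase : K ≤ ht α + m
      · exact ih α β hne hht hcase
      · have hαlt : ht α + m < K := by omega
        have hαne : α ≠ T.root := by
          intro h; rw [h, hroot] at hαlt; omega
        have hβne : β ≠ T.root := by
          intro h; rw [h, hroot] at hht; omega
        by_cases hpp : T.parent α = T.parent β
        · exact T.children_disjoint hαne hβne rfl hpp.symm hne
        · have hd : Disjoint (T.label (T.parent α)) (T.label (T.parent β)) := by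
            refine ih _ _ hpp ?_ ?_
            · rw [hparent α hαne, hparent β hβne, hht]
            · rw [hparent α hαne]; omega
          exact hd.mono (hsub α hαne) (hsub β hβne)
  -- notation
  set S : Finset ι := Finset.univ.filter (fun α => α ≠ T.root) with hSdef
  set f : ι → ℝ := fun α =>
    (vol w (T.label α) / Vv) * Real.log (vol w (T.label α) / Vv) with hfdef
  have hlabpos : ∀ α, 0 < vol w (T.label α) := fun α => volpos _ (T.label_nonempty α)
  -- Step 1: replace cut by vol
  have step1 : structEntropy w T ≤
      - ∑ α ∈ S, (vol w (T.label α) / Vv) *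
        Real.log (vol w (T.label α) / vol w (T.label (T.parent α))) := by
    rw [structEntropy]
    refine neg_le_neg (Finset.sum_le_sum fun α hα => ?_)
    have hαne : α ≠ T.root := (Finset.mem_filter.1 hα).2
    have hvle : vol w (T.label α) ≤ vol w (T.label (T.parent α)) := volmono (hsub α hαne)
    have hlog : Real.log (vol w (T.label α) / vol w (T.label (T.parent α))) ≤ 0 := by
      refine Real.log_nonpos (div_nonneg (hlabpos α).le (hlabpos _).le) ?_
      rw [div_le_one (hlabpos _)]
      exact hvle
    refine mul_le_mul_of_nonpos_right ?_ hlog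
    gcongr
    exact cutle _
  -- Step 2: rewrite using logs relative to Vv
  have step2 : - ∑ α ∈ S, (vol w (T.label α) / Vv) *
        Real.log (vol w (T.label α) / vol w (T.label (T.parent α)))
      = (∑ α ∈ S, (vol w (T.label α) / Vv) *
          Real.log (vol w (T.label (T.parent α)) / Vv)) - ∑ α ∈ S, f α := by
    rw [← Finset.sum_sub_distrib, ← Finset.sum_neg_distrib]
    refine Finset.sum_congr rfl fun α hα => ?_
    simp only [hfdef]
    rw [Real.log_div (hlabpos α).ne' (hlabpos (T.parent α)).ne',
      Real.log_div (hlabpos α).ne' hVpos.ne',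
      Real.log_div (hlabpos (T.parent α)).ne' hVpos.ne']
    ring
  -- sum of children volumes
  have hvolsum : ∀ p, (T.children p).Nonempty →
      ∑ β ∈ T.children p, vol w (T.label β) = vol w (T.label p) := by
    rintro p ⟨β, hβ⟩
    have hβ' := Finset.mem_filter.1 hβ
    have hU := T.children_union p ⟨β, hβ'.2.1, hβ'.2.2⟩
    have hpd : Set.PairwiseDisjoint (↑(T.children p)) T.label := by
      intro x hx y hy hxy
      have hx' := Finset.mem_filter.1 hx
      have hy' := Finset.mem_filter.1 hy
      exact T.children_disjoint hx'.2.1 hy'.2.1 hx'.2.2 hy'.2.2 hxy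
    calc ∑ β ∈ T.children p, vol w (T.label β)
        = vol w ((T.children p).biUnion T.label) := by
          rw [vol, Finset.sum_biUnion hpd]; rfl
      _ = vol w (T.label p) := by
          rw [show (T.children p).biUnion T.label = T.label p from hU]
  -- the fibers of the parent map on S are the children sets
  have hfiber : ∀ p, S.filter (fun α => T.parent α = p) = T.children p := by
    intro p
    ext α
    simp [hSdef, EncodingTree.children, Finset.mem_filter, and_assoc]
  -- Step 3: regroup the first sum by parents
  have step3 : (∑ α ∈ S, (vol w (T.label α) / Vv) *
        Real.log (vol w (T.label (T.parent α)) / Vv))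
      = ∑ p ∈ S.filter (fun α => (T.children α).Nonempty), f p := by
    rw [← Finset.sum_fiberwise S T.parent
      (fun α => (vol w (T.label α) / Vv) * Real.log (vol w (T.label (T.parent α)) / Vv))]
    have key : ∀ p : ι, (∑ α ∈ S.filter (fun α => T.parent α = p),
        (vol w (T.label α) / Vv) * Real.log (vol w (T.label (T.parent α)) / Vv))
        = if p ∈ S.filter (fun α => (T.children α).Nonempty) then f p else 0 := by
      intro p
      have hconst : (∑ α ∈ S.filter (fun α => T.parent α = p),
          (vol w (T.label α) / Vv) * Real.log (vol w (T.label (T.parent α)) / Vv))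
          = (∑ β ∈ T.children p, vol w (T.label β)) / Vv *
            Real.log (vol w (T.label p) / Vv) := by
        rw [hfiber p, Finset.sum_div, Finset.sum_mul]
        refine Finset.sum_congr rfl fun α hα => ?_
        rw [(Finset.mem_filter.1 hα).2.2]
      rw [hconst]
      by_cases hne : (T.children p).Nonempty
      · rw [hvolsum p hne]
        by_cases hproot : p = T.root
        · have : vol w (T.label p) = Vv := by rw [hproot, T.label_root]
          rw [this, div_self hVpos.ne', Real.log_one, mul_zero, if_neg]
          simp [hSdef, hproot]
        · rw [if_pos (by simp [hSdef, hproot, hne])]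
      · rw [Finset.not_nonempty_iff_eq_empty.1 hne, Finset.sum_empty, zero_div, zero_mul,
          if_neg (by simp [hne])]
    calc (∑ p : ι, ∑ α ∈ S.filter (fun α => T.parent α = p),
          (vol w (T.label α) / Vv) * Real.log (vol w (T.label (T.parent α)) / Vv))
        = ∑ p : ι, if p ∈ S.filter (fun α => (T.children α).Nonempty) then f p else 0 :=
          Finset.sum_congr rfl fun p _ => key p
      _ = ∑ p ∈ S.filter (fun α => (T.children α).Nonempty), f p := by
          rw [Finset.sum_ite_mem, Finset.univ_inter]
  -- Step 4: telescoping leaves only the leaf layer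
  set Lf : Finset ι := S.filter (fun α => ¬ (T.children α).Nonempty) with hLfdef
  have step4 : (∑ p ∈ S.filter (fun α => (T.children α).Nonempty), f p) - ∑ α ∈ S, f α
      = - ∑ α ∈ Lf, f α := by
    have := Finset.sum_filter_add_sum_filter_not S (fun α => (T.children α).Nonempty) f
    rw [hLfdef]
    linarith
  -- leaves have no children, singleton labels, height 0
  have hnochild : ∀ α ∈ Lf, ∀ β, β ≠ T.root → T.parent β ≠ α := by
    intro α hα β hβ hpβ
    have h := (Finset.mem_filter.1 hα).2
    exact h ⟨β, Finset.mem_filter.2 ⟨Finset.mem_univ _, hβ, hpβ⟩⟩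
  set φ : ι → V := fun α => (T.label_nonempty α).choose with hφdef
  have hφmem : ∀ α, φ α ∈ T.label α := fun α => (T.label_nonempty α).choose_spec
  have hsing : ∀ α ∈ Lf, T.label α = {φ α} := by
    intro α hα
    obtain ⟨a, ha⟩ := Finset.card_eq_one.1 (T.leaf_singleton α (hnochild α hα))
    have := hφmem α
    rw [ha, Finset.mem_singleton] at this
    rw [ha, this]
  have hht0 : ∀ α ∈ Lf, ht α = 0 := fun α hα => hleaf α (hnochild α hα)
  -- injectivity of the leaf-vertex map
  have hφinj : ∀ α ∈ Lf, ∀ β ∈ Lf, φ α = φ β → α = β := by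
    intro α hα β hβ hφeq
    by_contra hne
    have hd := hdisj K α β hne (by rw [hht0 α hα, hht0 β hβ]) (by omega)
    rw [hsing α hα, hsing β hβ, Finset.disjoint_singleton] at hd
    exact hd hφeq
  -- the value of f at leaves
  have hfval : ∀ α ∈ Lf, f α = (deg w (φ α) / Vv) * Real.log (deg w (φ α) / Vv) := by
    intro α hα
    have : vol w (T.label α) = deg w (φ α) := by
      rw [hsing α hα, vol, Finset.sum_singleton]
    rw [hfdef]
    simp only [this]
  -- nonnegativity of the summands of the Shannon entropy
  have gnn : ∀ v : V, 0 ≤ -((deg w v / Vv) * Real.log (deg w v / Vv)) := by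
    intro v
    have hdle : deg w v ≤ Vv :=
      Finset.single_le_sum (fun u _ => (hdeg u).le) (Finset.mem_univ v)
    have hlog : Real.log (deg w v / Vv) ≤ 0 :=
      Real.log_nonpos (div_nonneg (hdeg v).le hVpos.le) ((div_le_one hVpos).2 hdle)
    have := mul_nonpos_of_nonneg_of_nonpos
      (div_nonneg (hdeg v).le hVpos.le) hlog
    linarith
  -- Step 5: compare with the Shannon entropy
  have step5 : - ∑ α ∈ Lf, f α ≤
      - ∑ v, (deg w v / Vv) * Real.log (deg w v / Vv) := by
    have h1 : - ∑ α ∈ Lf, f α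
        = ∑ α ∈ Lf, -((deg w (φ α) / Vv) * Real.log (deg w (φ α) / Vv)) := by
      rw [Finset.sum_neg_distrib, neg_inj]
      exact Finset.sum_congr rfl hfval
    have h2 : (∑ α ∈ Lf, -((deg w (φ α) / Vv) * Real.log (deg w (φ α) / Vv)))
        = ∑ v ∈ Lf.image φ, -((deg w v / Vv) * Real.log (deg w v / Vv)) :=
      (Finset.sum_image (f := fun v => -((deg w v / Vv) * Real.log (deg w v / Vv))) hφinj).symm
    have h3 : (∑ v ∈ Lf.image φ, -((deg w v / Vv) * Real.log (deg w v / Vv)))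
        ≤ ∑ v, -((deg w v / Vv) * Real.log (deg w v / Vv)) :=
      Finset.sum_le_sum_of_subset_of_nonneg (Finset.subset_univ _)
        (fun v _ _ => gnn v)
    rw [h1, h2, ← Finset.sum_neg_distrib]
    exact h3
  calc structEntropy w T
      ≤ - ∑ α ∈ S, (vol w (T.label α) / Vv) *
          Real.log (vol w (T.label α) / vol w (T.label (T.parent α))) := step1
    _ = (∑ α ∈ S, (vol w (T.label α) / Vv) *
          Real.log (vol w (T.label (T.parent α)) / Vv)) - ∑ α ∈ S, f α := step2
    _ = (∑ p ∈ S.filter (fun α => (T.children α).Nonempty), f p) - ∑ α ∈ S, f α := by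
        rw [step3]
    _ = - ∑ α ∈ Lf, f α := step4
    _ ≤ - ∑ v, (deg w v / Vv) * Real.log (deg w v / Vv) := step5
end

section
/- Let (V,w) be a finite weighted graph as in the context, let T be an encoding tree of (V,w) of height K in which every leaf is at height 0 and the root λ at height K, and for 1 ≤ h ≤ K−1 let U_h be the set of nodes of T at height h. With H(S) = − Σ_{v∈V} (d_v/vol(V))·log(d_v/vol(V)), H(U_h) = − Σ_{α∈U_h} (vol(V_α)/vol(V))·log(vol(V_α)/vol(V)), and η_h = max_{α∈U_h} ((Σ_{i=1}^{l_α} g(V_{α_i}) − g(V_α))/vol(V_α)) where α_1,…,α_{l_α} are the children of α, the structural entropy satisfies H^T ≥ H(S) − Σ_{h=1}^{K−1} η_h·H(U_h). -/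
open Finset

variable {V ι : Type*}

variable [Fintype V] [DecidableEq V] [Fintype ι] [DecidableEq ι]

/-!
Write `L α = log (vol V_α / vol V)`, so that `L λ = 0` and the logarithm in `H^T` is
`L α - L α⁻`. Regrouping the sum by parents gives
`H^T = Σ_α ((Σ_i g(V_{α_i}) - g(V_α)) / vol V) · L α`.
At height `0` the nodes are exactly the leaves, whose labels are the singletons `{v}` with
`g({v}) = d_v`, so that layer contributes `H(S)`. At a height `h ≥ 1` each term is
`((Σ_i g(V_{α_i}) - g(V_α)) / vol V_α) · (vol V_α / vol V) · L α`, and since `L α ≤ 0`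
replacing the first factor by its maximum `η_h` only decreases it: the layer contributes at
least `-η_h · H(U_h)`.
-/

omit [DecidableEq V] in
theorem vol_pos {w : V → V → ℝ} (hdeg : ∀ v, 0 < deg w v) {A : Finset V} (hA : A.Nonempty) :
    0 < vol w A :=
  sum_pos (fun v _ => hdeg v) hA

omit [DecidableEq V] in
theorem vol_mono {w : V → V → ℝ} (hdeg : ∀ v, 0 ≤ deg w v) {A B : Finset V} (h : A ⊆ B) :
    vol w A ≤ vol w B :=
  sum_le_sum_of_subset_of_nonneg h fun v _ _ => hdeg v

omit [DecidableEq V] in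
theorem vol_singleton (w : V → V → ℝ) (v : V) : vol w {v} = deg w v :=
  sum_singleton _ _

theorem cut_singleton {w : V → V → ℝ} (hsym : ∀ u v, w u v = w v u) (hloop : ∀ v, w v v = 0)
    (v : V) : cut w {v} = deg w v := by
  have hsplit := sum_add_sum_compl {v} fun u => w u v
  rw [sum_singleton, hloop, zero_add] at hsplit
  rw [cut, sum_congr rfl fun u _ => sum_singleton (w u) v, hsplit, deg]
  exact sum_congr rfl fun u _ => hsym u v

/-- The quantity `Σ_i g(V_{α_i}) - g(V_α)` whose normalization by `vol V_α` defines `η_h`. -/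
noncomputable def cutExcess (w : V → V → ℝ) (T : EncodingTree V ι) (α : ι) : ℝ :=
  (∑ β ∈ T.children α, cut w (T.label β)) - cut w (T.label α)

theorem le_layerWeight (w : V → V → ℝ) (T : EncodingTree V ι) {ht : ι → ℕ} {α : ι} :
    cutExcess w T α / vol w (T.label α) ≤ layerWeight w T ht (ht α) :=
  le_csSup (Set.toFinite _).bddAbove ⟨α, rfl, rfl⟩

namespace EncodingTree

variable (T : EncodingTree V ι)

@[simp]
theorem mem_children {α β : ι} : β ∈ T.children α ↔ β ≠ T.root ∧ T.parent β = α := by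
  simp [children]

theorem biUnion_children {α : ι} (h : (T.children α).Nonempty) :
    (T.children α).biUnion T.label = T.label α := by
  obtain ⟨β, hβ⟩ := h
  exact T.children_union α ⟨β, T.mem_children.1 hβ⟩

theorem label_subset_label_parent {β : ι} (hβ : β ≠ T.root) :
    T.label β ⊆ T.label (T.parent β) := by
  rw [← T.biUnion_children (α := T.parent β) ⟨β, by simp [hβ]⟩]
  exact subset_biUnion_of_mem T.label (by simp [hβ])

/-- Summation by parts along the tree. -/
theorem sum_mul_sub_parent {R : Type*} [CommRing R] (f g : ι → R) (hg : g T.root = 0) :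
    ∑ α with α ≠ T.root, f α * (g (T.parent α) - g α) =
      ∑ α, ((∑ β ∈ T.children α, f β) - f α) * g α := by
  have hparents : ∑ α with α ≠ T.root, f α * g (T.parent α) =
      ∑ α, (∑ β ∈ T.children α, f β) * g α := by
    rw [← sum_fiberwise_of_maps_to (g := T.parent) (t := univ) fun _ _ => mem_univ _]
    refine sum_congr rfl fun α _ => ?_
    rw [filter_filter, sum_mul]
    exact sum_congr rfl fun β hβ => by rw [(mem_filter.1 hβ).2.2]
  have hnonroot : ∑ α with α ≠ T.root, f α * g α = ∑ α, f α * g α :=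
    sum_filter_of_ne fun α _ h hα => h (by rw [hα, hg, mul_zero])
  simp only [mul_sub, sum_sub_distrib, hparents, hnonroot, sub_mul]

section Height

variable {T} {ht : ι → ℕ} (hparent : ∀ β, β ≠ T.root → ht (T.parent β) = ht β + 1)
include hparent

theorem ht_lt_ht_root {β : ι} (hβ : β ≠ T.root) : ht β < ht T.root := by
  have hstep := hparent β hβ
  by_cases hp : T.parent β = T.root
  · rw [← hp]
    omega
  · have := ht_lt_ht_root hp
    omega
termination_by univ.sup ht - ht β
decreasing_by
  have := le_sup (f := ht) (mem_univ (T.parent β))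
  omega

theorem disjoint_label_of_ht_eq {α β : ι} (hne : α ≠ β) (hht : ht α = ht β) :
    Disjoint (T.label α) (T.label β) := by
  have hα : α ≠ T.root := by
    rintro rfl
    exact (ht_lt_ht_root hparent hne.symm).ne hht.symm
  have hβ : β ≠ T.root := by
    rintro rfl
    exact (ht_lt_ht_root hparent hne).ne hht
  by_cases hp : T.parent α = T.parent β
  · exact T.children_disjoint hα hβ rfl hp.symm hne
  · have hpht : ht (T.parent α) = ht (T.parent β) := by rw [hparent α hα, hparent β hβ, hht]
    exact (disjoint_label_of_ht_eq hp hpht).mono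
      (T.label_subset_label_parent hα) (T.label_subset_label_parent hβ)
termination_by ht T.root - ht α
decreasing_by
  have := ht_lt_ht_root hparent hα
  have := hparent α hα
  omega

theorem parent_ne_of_ht_eq_zero {α : ι} (h0 : ht α = 0) (β : ι) (hβ : β ≠ T.root) :
    T.parent β ≠ α := by
  rintro rfl
  have := hparent β hβ
  omega

theorem children_eq_empty_of_ht_eq_zero {α : ι} (h0 : ht α = 0) : T.children α = ∅ :=
  filter_eq_empty_iff.2 fun β _ ⟨hβ, hp⟩ => parent_ne_of_ht_eq_zero hparent h0 β hβ hp

variable (hleaf : ∀ α, (∀ β, β ≠ T.root → T.parent β ≠ α) → ht α = 0)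
include hleaf

theorem exists_ht_eq_zero_mem_label {α : ι} {v : V} (hv : v ∈ T.label α) :
    ∃ ℓ, ht ℓ = 0 ∧ v ∈ T.label ℓ := by
  by_cases hc : (T.children α).Nonempty
  · rw [← T.biUnion_children hc] at hv
    obtain ⟨β, hβ, hvβ⟩ := mem_biUnion.1 hv
    obtain ⟨hβr, rfl⟩ := T.mem_children.1 hβ
    have := hparent β hβr
    exact exists_ht_eq_zero_mem_label hvβ
  · exact ⟨α, hleaf α fun β hβ hp => hc ⟨β, by simp [hβ, hp]⟩, hv⟩
termination_by ht α

/-- The labels of the nodes of height `0` are the singletons of the vertices. -/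
theorem sum_label_ht_eq_zero {M : Type*} [AddCommMonoid M] (F : Finset V → M) :
    ∑ α with ht α = 0, F (T.label α) = ∑ v, F {v} := by
  have hsingleton : ∀ α ∈ ({α | ht α = 0} : Finset ι), ∃ a, T.label α = {a} := fun α hα =>
    card_eq_one.1 (T.leaf_singleton α (parent_ne_of_ht_eq_zero hparent (mem_filter.1 hα).2))
  have hcover : ({α | ht α = 0} : Finset ι).biUnion T.label = univ :=
    eq_univ_of_forall fun v => by
      obtain ⟨ℓ, hℓ, hv⟩ := exists_ht_eq_zero_mem_label hparent hleaf
        (T.label_root ▸ mem_univ v : v ∈ T.label T.root)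
      exact mem_biUnion.2 ⟨ℓ, by simp [hℓ], hv⟩
  have hdisj : Set.PairwiseDisjoint ↑({α | ht α = 0} : Finset ι) T.label :=
    fun α hα β hβ hne => disjoint_label_of_ht_eq hparent hne
      ((mem_filter.1 hα).2.trans (mem_filter.1 hβ).2.symm)
  rw [← hcover, sum_biUnion hdisj]
  refine sum_congr rfl fun α hα => ?_
  obtain ⟨a, ha⟩ := hsingleton α hα
  rw [ha, sum_singleton]

end Height

end EncodingTree

section Entropy

variable {w : V → V → ℝ} (hdeg : ∀ v, 0 < deg w v) (T : EncodingTree V ι)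
include hdeg

theorem structEntropy_eq_sum_cutExcess :
    structEntropy w T = ∑ α, cutExcess w T α / vol w univ *
      Real.log (vol w (T.label α) / vol w univ) := by
  have hW := vol_pos hdeg (T.label_root ▸ T.label_nonempty T.root)
  have hlog : ∀ α, Real.log (vol w (T.label α) / vol w (T.label (T.parent α))) =
      Real.log (vol w (T.label α) / vol w univ) -
        Real.log (vol w (T.label (T.parent α)) / vol w univ) := fun α => by
    have hα := vol_pos hdeg (T.label_nonempty α)
    have hp := vol_pos hdeg (T.label_nonempty (T.parent α))
    rw [Real.log_div hα.ne' hp.ne', Real.log_div hα.ne' hW.ne', Real.log_div hp.ne' hW.ne']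
    ring
  rw [structEntropy, ← sum_neg_distrib]
  simp_rw [hlog, ← mul_neg, neg_sub]
  rw [T.sum_mul_sub_parent (fun α => cut w (T.label α) / vol w univ)
    (fun α => Real.log (vol w (T.label α) / vol w univ))
    (by rw [T.label_root, div_self hW.ne', Real.log_one])]
  simp_rw [cutExcess, sub_div, sum_div]

theorem neg_layerWeight_mul_layerEntropy_le (ht : ι → ℕ) (h : ℕ) :
    -(layerWeight w T ht h * layerEntropy w T ht h) ≤
      ∑ α with ht α = h, cutExcess w T α / vol w univ *
        Real.log (vol w (T.label α) / vol w univ) := by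
  have hW := vol_pos hdeg (T.label_root ▸ T.label_nonempty T.root)
  rw [layerEntropy, mul_neg, neg_neg, mul_sum]
  refine sum_le_sum fun α hα => ?_
  have hα' := vol_pos hdeg (T.label_nonempty α)
  have hlog : Real.log (vol w (T.label α) / vol w univ) ≤ 0 :=
    Real.log_nonpos (by positivity)
      (div_le_one_of_le₀ (vol_mono (fun v => (hdeg v).le) (subset_univ _)) hW.le)
  calc layerWeight w T ht h * (vol w (T.label α) / vol w univ *
        Real.log (vol w (T.label α) / vol w univ))
      ≤ cutExcess w T α / vol w (T.label α) * (vol w (T.label α) / vol w univ *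
        Real.log (vol w (T.label α) / vol w univ)) := by
        refine mul_le_mul_of_nonpos_right ?_ (mul_nonpos_of_nonneg_of_nonpos (by positivity) hlog)
        exact (mem_filter.1 hα).2 ▸ le_layerWeight w T
    _ = _ := by field_simp

omit hdeg in
theorem sum_cutExcess_ht_eq_zero (hsym : ∀ u v, w u v = w v u) (hloop : ∀ v, w v v = 0)
    {ht : ι → ℕ} (hleaf : ∀ α, (∀ β, β ≠ T.root → T.parent β ≠ α) → ht α = 0)
    (hparent : ∀ β, β ≠ T.root → ht (T.parent β) = ht β + 1) :
    ∑ α with ht α = 0, cutExcess w T α / vol w univ *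
      Real.log (vol w (T.label α) / vol w univ) = shannonDeg w := by
  have hleafTerm : ∀ α ∈ ({α | ht α = 0} : Finset ι), cutExcess w T α / vol w univ *
      Real.log (vol w (T.label α) / vol w univ) = -(cut w (T.label α) / vol w univ *
        Real.log (vol w (T.label α) / vol w univ)) := fun α hα => by
    rw [cutExcess, EncodingTree.children_eq_empty_of_ht_eq_zero hparent (mem_filter.1 hα).2]
    ring
  rw [sum_congr rfl hleafTerm, T.sum_label_ht_eq_zero hparent hleaf
    fun A => -(cut w A / vol w univ * Real.log (vol w A / vol w univ)), shannonDeg,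
    ← sum_neg_distrib]
  simp_rw [cut_singleton hsym hloop, vol_singleton]

end Entropy

theorem structural_entropy_ge_shannon_sub_general
    (w : V → V → ℝ)
    (hsym : ∀ u v, w u v = w v u)
    (hloop : ∀ v, w v v = 0)
    (hdeg : ∀ v, 0 < deg w v)
    (T : EncodingTree V ι) (K : ℕ) (ht : ι → ℕ)
    (hroot : ht T.root = K)
    (hleaf : ∀ α, (∀ β, β ≠ T.root → T.parent β ≠ α) → ht α = 0)
    (hparent : ∀ β, β ≠ T.root → ht (T.parent β) = ht β + 1) :
    shannonDeg w - ∑ h ∈ Finset.Icc 1 (K - 1), layerWeight w T ht h * layerEntropy w T ht h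
      ≤ structEntropy w T := by
  set F : ι → ℝ := fun α =>
    cutExcess w T α / vol w univ * Real.log (vol w (T.label α) / vol w univ)
  have hW := vol_pos hdeg (T.label_root ▸ T.label_nonempty T.root)
  -- only the root lies above height `K - 1`, and its term vanishes
  have hsupport : ∀ α ∈ univ, F α ≠ 0 → ht α ∈ insert 0 (Icc 1 (K - 1)) := by
    intro α _ hα
    have hαr : α ≠ T.root := by
      rintro rfl
      simp [F, T.label_root, div_self hW.ne'] at hα
    have := EncodingTree.ht_lt_ht_root hparent hαr
    simp only [mem_insert, mem_Icc]
    omega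
  calc shannonDeg w - ∑ h ∈ Icc 1 (K - 1), layerWeight w T ht h * layerEntropy w T ht h
      = ∑ α with ht α = 0, F α +
          ∑ h ∈ Icc 1 (K - 1), -(layerWeight w T ht h * layerEntropy w T ht h) := by
        rw [sum_cutExcess_ht_eq_zero T hsym hloop hleaf hparent, sum_neg_distrib, sub_eq_add_neg]
    _ ≤ ∑ α with ht α = 0, F α + ∑ h ∈ Icc 1 (K - 1), ∑ α with ht α = h, F α := by
        gcongr with h
        exact neg_layerWeight_mul_layerEntropy_le hdeg T ht h
    _ = ∑ h ∈ insert 0 (Icc 1 (K - 1)), ∑ α with ht α = h, F α := by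
        rw [sum_insert (by simp)]
    _ = ∑ α with ht α ∈ insert 0 (Icc 1 (K - 1)), F α := sum_fiberwise_eq_sum_filter _ _ _ _
    _ = ∑ α, F α := sum_filter_of_ne hsupport
    _ = structEntropy w T := (structEntropy_eq_sum_cutExcess hdeg T).symm

/-- **Lower bound of Theorem 4.2.** For an encoding tree of height `K` (leaves at height
`0`, root at height `K`), the structural entropy satisfies
`H^T ≥ H(S) − Σ_{h=1}^{K−1} η_h · H(U_h)`. -/
theorem structural_entropy_ge_shannon_sub [Nonempty V]
    (w : V → V → ℝ)
    (hsym : ∀ u v, w u v = w v u)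
    (hnn : ∀ u v, 0 ≤ w u v)
    (hloop : ∀ v, w v v = 0)
    (hdeg : ∀ v, 0 < deg w v)
    (T : EncodingTree V ι) (K : ℕ) (ht : ι → ℕ)
    (hroot : ht T.root = K)
    (hleaf : ∀ α, (∀ β, β ≠ T.root → T.parent β ≠ α) → ht α = 0)
    (hparent : ∀ β, β ≠ T.root → ht (T.parent β) = ht β + 1) :
    shannonDeg w - ∑ h ∈ Finset.Icc 1 (K - 1), layerWeight w T ht h * layerEntropy w T ht h
      ≤ structEntropy w T :=
  structural_entropy_ge_shannon_sub_general w hsym hloop hdeg T K ht hroot hleaf hparent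
end
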